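/- Let G(x) = ∫₁^∞ e^{−x·t}/t dt for x > 0. For every θ ∈ (0,1], ∫₀^∞ ∫₀^∞ ( e^{−(x+y+θ·x·y)} − e^{−(x+y)} )² dx dy = (1/(2θ))·e^{2/θ}·G(2/θ) + 1/4 − (2/θ)·e^{4/θ}·G(4/θ). (This is the value of Bergsma's covariance κ(θ) for Gumbel's bivariate exponential distribution GBED-I with dependence parameter θ, whose joint distribution function is F(x,y) = 1 − e^{−x} − e^{−y} + e^{−(x+y+θxy)} on (0,∞)², since κ(θ) = ∫∫ (F(x,y) − F₁(x)F₂(y))² dx dy with standard exponential marginals.) -/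

import Mathlib

open MeasureTheory

/-- `G(x) = ∫₁^∞ e^{-x t} / t dt`. -/
noncomputable def G (x : ℝ) : ℝ := ∫ t in Set.Ioi (1 : ℝ), Real.exp (-x * t) / t

open Set Real

/-- `∫₀^∞ e^{-by} dy = 1/b`. -/
lemma exp_int {b : ℝ} (hb : 0 < b) :
    (∫ y in Ioi (0:ℝ), Real.exp (-(b*y))) = 1/b := by
  have := integral_comp_mul_left_Ioi (fun y => Real.exp (-y)) 0 hb
  simp only [mul_zero, integral_exp_neg_Ioi, neg_zero, Real.exp_zero, smul_eq_mul,
    mul_one] at this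
  simpa [neg_mul, one_div] using this

/-- Translation invariance for integrals over `Ioi`. -/
lemma int_shift (f : ℝ → ℝ) (a d : ℝ) :
    (∫ x in Ioi a, f (x + d)) = ∫ x in Ioi (a + d), f x := by
  rw [← integral_indicator measurableSet_Ioi, ← integral_indicator measurableSet_Ioi,
    ← integral_add_right_eq_self (fun x => (Ioi (a+d)).indicator f x) d]
  congr 1
  ext x
  by_cases h : a < x <;>
    simp [Set.indicator_apply, h, add_lt_add_iff_right, mem_Ioi]

/-- Key substitution: `∫₀^∞ e^{-cx}/(1+bx) dx = b⁻¹ e^{c/b} G(c/b)`. -/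
lemma sub_lemma {b c : ℝ} (hb : 0 < b) (hc : 0 < c) :
    (∫ x in Ioi (0:ℝ), Real.exp (-(c*x)) / (1 + b*x)) = b⁻¹ * (Real.exp (c/b) * G (c/b)) := by
  have hb' := hb.ne'
  set h : ℝ → ℝ := fun t => Real.exp (c/b - (c/b)*t) / t with hh
  have h1 : Real.exp (c/b) * G (c/b) = ∫ t in Ioi (1:ℝ), h t := by
    rw [G, ← MeasureTheory.integral_const_mul]
    congr 1; funext t
    simp only [hh, ← mul_div_assoc, ← Real.exp_add]
    ring_nf
  have h2 : (∫ t in Ioi (1:ℝ), h t) = ∫ x in Ioi (0:ℝ), h (x + 1) := by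
    rw [int_shift h 0 1, zero_add]
  have h3 : (∫ x in Ioi (0:ℝ), h (b*x + 1)) = b⁻¹ * ∫ x in Ioi (0:ℝ), h (x + 1) := by
    have := integral_comp_mul_left_Ioi (fun x => h (x + 1)) 0 hb
    simp only [mul_zero, smul_eq_mul] at this
    exact this
  have h4 : (fun x => Real.exp (-(c*x)) / (1 + b*x)) = fun x => h (b*x + 1) := by
    funext x
    rw [hh]
    have : c/b - (c/b)*(b*x+1) = -(c*x) := by field_simp; ring
    simp only []
    rw [this, add_comm 1 (b*x)]
  rw [h4, h3, ← h2, h1]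

lemma intg {b c d : ℝ} (hc : 0 < c) (hb : 0 ≤ b) (hd : 0 < d) :
    IntegrableOn (fun x => Real.exp (-(c*x)) / (d + b*x)) (Ioi (0:ℝ)) := by
  have hg : IntegrableOn (fun x => Real.exp (-(c*x)) / d) (Ioi (0:ℝ)) := by
    have := (exp_neg_integrableOn_Ioi 0 hc).div_const d
    simp only [neg_mul] at this
    exact this
  refine Integrable.mono hg (Measurable.aestronglyMeasurable (by fun_prop)) ?_
  filter_upwards [ae_restrict_mem measurableSet_Ioi] with x hx
  have hx0 : (0:ℝ) < x := hx
  have hdb : 0 < d + b*x := lt_of_lt_of_le hd (le_add_of_nonneg_right (mul_nonneg hb hx0.le))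
  rw [Real.norm_eq_abs, Real.norm_eq_abs, abs_div, abs_div,
    abs_of_pos (Real.exp_pos _), abs_of_pos hdb, abs_of_pos hd]
  gcongr
  exact le_add_of_nonneg_right (mul_nonneg hb hx0.le)

lemma inner_int {θ x : ℝ} (hθ : 0 < θ) (hx : 0 < x) :
    (∫ y in Ioi (0:ℝ), (Real.exp (-(x + y + θ * x * y)) - Real.exp (-(x + y))) ^ 2)
      = Real.exp (-(2*x)) / (2+2*θ*x) - 2 * (Real.exp (-(2*x)) / (2+θ*x))
        + Real.exp (-(2*x)) / 2 := by
  have h1 : (0:ℝ) < 2 + 2*θ*x := by positivity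
  have h2 : (0:ℝ) < 2 + θ*x := by positivity
  have i1 : IntegrableOn (fun y => Real.exp (-((2+2*θ*x)*y))) (Ioi (0:ℝ)) := by
    simpa only [neg_mul] using exp_neg_integrableOn_Ioi 0 h1
  have i2 : IntegrableOn (fun y => 2 * Real.exp (-((2+θ*x)*y))) (Ioi (0:ℝ)) := by
    have : IntegrableOn (fun y => Real.exp (-((2+θ*x)*y))) (Ioi (0:ℝ)) := by
      simpa only [neg_mul] using exp_neg_integrableOn_Ioi 0 h2
    exact this.const_mul 2
  have i3 : IntegrableOn (fun y => Real.exp (-(2*y))) (Ioi (0:ℝ)) := by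
    simpa only [neg_mul] using exp_neg_integrableOn_Ioi 0 two_pos
  have key : ∀ a b : ℝ, (Real.exp a - Real.exp b)^2
      = Real.exp (a+a) - 2*Real.exp (a+b) + Real.exp (b+b) := by
    intro a b
    rw [sub_sq, sq, sq, ← Real.exp_add, mul_assoc, ← Real.exp_add, ← Real.exp_add]
  have step : (∫ y in Ioi (0:ℝ), (Real.exp (-(x + y + θ * x * y)) - Real.exp (-(x + y))) ^ 2)
      = ∫ y in Ioi (0:ℝ), Real.exp (-(2*x)) * (Real.exp (-((2+2*θ*x)*y))
          - 2 * Real.exp (-((2+θ*x)*y)) + Real.exp (-(2*y))) := by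
    refine setIntegral_congr_fun measurableSet_Ioi (fun y _ => ?_)
    rw [key,
      show -(x + y + θ * x * y) + -(x + y + θ * x * y) = -(2*x) + -((2+2*θ*x)*y) by ring,
      show -(x + y + θ * x * y) + -(x + y) = -(2*x) + -((2+θ*x)*y) by ring,
      show -(x + y) + -(x + y) = -(2*x) + -(2*y) by ring,
      Real.exp_add, Real.exp_add, Real.exp_add]
    ring
  have i12 : IntegrableOn (fun y => Real.exp (-((2+2*θ*x)*y))
      - 2 * Real.exp (-((2+θ*x)*y))) (Ioi (0:ℝ)) := i1.sub i2
  rw [step, MeasureTheory.integral_const_mul,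
    integral_add i12 i3, integral_sub i1 i2,
    MeasureTheory.integral_const_mul, exp_int h1, exp_int h2, exp_int two_pos]
  ring

theorem stmt4 (θ : ℝ) (hθ : θ ∈ Set.Ioc (0 : ℝ) 1) :
    (∫ x in Set.Ioi (0 : ℝ), ∫ y in Set.Ioi (0 : ℝ),
        (Real.exp (-(x + y + θ * x * y)) - Real.exp (-(x + y))) ^ 2) =
      (1 / (2 * θ)) * Real.exp (2 / θ) * G (2 / θ) + 1 / 4 -
        (2 / θ) * Real.exp (4 / θ) * G (4 / θ) := by
  obtain ⟨hθ0, -⟩ := hθ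
  have hθ' : θ ≠ 0 := hθ0.ne'
  have step : (∫ x in Set.Ioi (0 : ℝ), ∫ y in Set.Ioi (0 : ℝ),
        (Real.exp (-(x + y + θ * x * y)) - Real.exp (-(x + y))) ^ 2)
      = ∫ x in Ioi (0:ℝ), (Real.exp (-(2*x)) / (2+2*θ*x)
          - 2 * (Real.exp (-(2*x)) / (2+θ*x)) + Real.exp (-(2*x)) / 2) :=
    setIntegral_congr_fun measurableSet_Ioi (fun x hx => inner_int hθ0 hx)
  have j1 : IntegrableOn (fun x => Real.exp (-(2*x)) / (2+2*θ*x)) (Ioi (0:ℝ)) :=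
    intg two_pos (by positivity) two_pos
  have j2 : IntegrableOn (fun x => 2 * (Real.exp (-(2*x)) / (2+θ*x))) (Ioi (0:ℝ)) :=
    (intg two_pos hθ0.le two_pos).const_mul 2
  have j3 : IntegrableOn (fun x => Real.exp (-(2*x)) / 2) (Ioi (0:ℝ)) := by
    have := (exp_neg_integrableOn_Ioi 0 two_pos).div_const 2
    simp only [neg_mul] at this
    exact this
  have hA : (∫ x in Ioi (0:ℝ), Real.exp (-(2*x)) / (2+2*θ*x))
      = (θ⁻¹ * (Real.exp (2/θ) * G (2/θ))) / 2 := by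
    have e : (fun x : ℝ => Real.exp (-(2*x)) / (2+2*θ*x))
        = fun x => (Real.exp (-(2*x)) / (1+θ*x)) / 2 := by
      funext x; rw [div_div]; congr 1; ring
    rw [e, integral_div, sub_lemma hθ0 two_pos]
  have hB : (∫ x in Ioi (0:ℝ), Real.exp (-(2*x)) / (2+θ*x))
      = ((θ/2)⁻¹ * (Real.exp (4/θ) * G (4/θ))) / 2 := by
    have e : (fun x : ℝ => Real.exp (-(2*x)) / (2+θ*x))
        = fun x => (Real.exp (-(2*x)) / (1+(θ/2)*x)) / 2 := by
      funext x; rw [div_div]; congr 1; ring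
    have h24 : (2:ℝ)/(θ/2) = 4/θ := by
      rw [div_div_eq_mul_div]; norm_num
    rw [e, integral_div, sub_lemma (half_pos hθ0) two_pos, h24]
  have hC : (∫ x in Ioi (0:ℝ), Real.exp (-(2*x)) / 2) = 1/4 := by
    rw [integral_div, exp_int two_pos]
    norm_num
  have j12 : IntegrableOn (fun x => Real.exp (-(2*x)) / (2+2*θ*x)
      - 2 * (Real.exp (-(2*x)) / (2+θ*x))) (Ioi (0:ℝ)) := j1.sub j2
  rw [step, integral_add j12 j3, integral_sub j1 j2,
    MeasureTheory.integral_const_mul, hA, hB, hC]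
  field_simp
  ring
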